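/- arXiv:1607.01058 — 2 statements merged into one kernel-verified Lean document; each statement's English description precedes it below -/
import Mathlib

section
/- Let $N_p \subseteq \mathbb{C}^{d_p}$ and $N_q \subseteq \mathbb{C}^{d_q}$ be linear subspaces of dimensions $e_p$ and $e_q$ respectively, with Plücker coordinates $(\Delta_{I'})_{|I'|=e_p}$ and $(\Delta_{J'})_{|J'|=e_q}$, and let $A = (m_{j,i})$ be a $d_q \times d_p$ complex matrix with $A(N_p) \subseteq N_q$. Then for every subset $I \subseteq \{1,\dots,d_p\}$ with $|I| = e_p - 1$ and every subset $J \subseteq \{1,\dots,d_q\}$ with $|J| = e_q + 1$, the quiver Plücker relation holds: $\sum_{i \in \{1,\dots,d_p\}\setminus I,\; j \in J} (-1)^{\epsilon(i,I)+\epsilon(j,J)}\, m_{j,i}\, \Delta_{I\cup\{i\}}\, \Delta_{J\setminus\{j\}} = 0$. -/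
open Matrix Finset

def eps {d : ℕ} (i : Fin d) (I : Finset (Fin d)) : ℕ := (I.filter fun i' => i' ≤ i).card

noncomputable def plucker {d e : ℕ} (B : Matrix (Fin d) (Fin e) ℂ) (I : Finset (Fin d)) : ℂ :=
  if h : I.card = e then (B.submatrix (fun k => (I.orderIsoOfFin h k : Fin d)) id).det else 0

/-- The columns of `B` form a basis of the subspace `N` of `ℂ^d`. -/
def IsColBasis {d e : ℕ} (B : Matrix (Fin d) (Fin e) ℂ) (N : Submodule ℂ (Fin d → ℂ)) : Prop :=
  LinearIndependent ℂ (fun l => fun i => B i l) ∧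
    Submodule.span ℂ (Set.range fun l => fun i => B i l) = N

noncomputable def qpr {dp dq ep eq : ℕ} (A : Matrix (Fin dq) (Fin dp) ℂ)
    (Bp : Matrix (Fin dp) (Fin ep) ℂ) (Bq : Matrix (Fin dq) (Fin eq) ℂ)
    (I : Finset (Fin dp)) (J : Finset (Fin dq)) : ℂ :=
  ∑ i ∈ Iᶜ, ∑ j ∈ J,
    (-1 : ℂ) ^ (eps i I + eps j J) * A j i * plucker Bp (insert i I) * plucker Bq (J.erase j)

/-!
Put `v i = (-1) ^ ε(i, I) * Δ_{I ∪ {i}}` for `i ∉ I` and `v i = 0` for `i ∈ I`. Up to the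
ordering of rows, `v i` is the minor of `Bp` on the rows `i, I`, so Laplace expansion along the
row `i` writes `v` as a combination of the columns of `Bp`: thus `v ∈ Np` and `A v ∈ Nq`. The
quiver Plücker relation is `∑_{j ∈ J} (-1) ^ ε(j, J) * (A v)_j * Δ_{J \ {j}}`, which is, up to
sign, the Laplace expansion along the first column of the minor on the rows `J` of `[A v | Bq]`;
it vanishes because `A v` is a combination of the columns of `Bq`.
-/

theorem mem_span_cols_iff_exists_mulVec {R m n : Type*} [CommSemiring R] [Fintype n]
    (B : Matrix m n R) (w : m → R) :
    w ∈ Submodule.span R (Set.range fun l i => B i l) ↔ ∃ c, B *ᵥ c = w := by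
  rw [show (Set.range fun l i => B i l) = Set.range B.col from rfl, ← range_mulVecLin,
    LinearMap.mem_range]
  rfl

theorem plucker_eq_det {d e : ℕ} (B : Matrix (Fin d) (Fin e) ℂ) {S : Finset (Fin d)}
    (hS : S.card = e) : plucker B S = (B.submatrix (S.orderEmbOfFin hS) id).det := by
  rw [plucker, dif_pos hS]
  rfl

theorem plucker_eq_zero_of_mulVec_eq_zero {d e : ℕ} {B : Matrix (Fin d) (Fin e) ℂ}
    {x : Fin e → ℂ} (hx : x ≠ 0) (hBx : B *ᵥ x = 0) (S : Finset (Fin d)) :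
    plucker B S = 0 := by
  by_cases hS : S.card = e
  · rw [plucker_eq_det B hS, ← exists_mulVec_eq_zero_iff]
    refine ⟨x, hx, funext fun k => ?_⟩
    simpa [mulVec, dotProduct] using congrFun hBx (S.orderEmbOfFin hS k)
  · rw [plucker, dif_neg hS]

theorem eps_orderEmbOfFin {d n : ℕ} {S : Finset (Fin d)} (hS : S.card = n + 1)
    (k : Fin (n + 1)) : eps (S.orderEmbOfFin hS k) S = k + 1 := by
  have : S.filter (· ≤ S.orderEmbOfFin hS k) = (Iic k).map (S.orderEmbOfFin hS).toEmbedding := by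
    ext x
    simp only [mem_filter, mem_map, mem_Iic, RelEmbedding.coe_toEmbedding]
    constructor
    · rintro ⟨hxS, hxk⟩
      obtain ⟨l, rfl⟩ : x ∈ Set.range (S.orderEmbOfFin hS) := by
        rwa [range_orderEmbOfFin]
      exact ⟨l, (S.orderEmbOfFin hS).le_iff_le.mp hxk, rfl⟩
    · rintro ⟨l, hlk, rfl⟩
      exact ⟨orderEmbOfFin_mem _ _ _, (S.orderEmbOfFin hS).le_iff_le.mpr hlk⟩
  rw [eps, this, card_map, Fin.card_Iic]

theorem eps_insert_self {d : ℕ} {i : Fin d} {I : Finset (Fin d)} (hi : i ∉ I) :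
    eps i (insert i I) = eps i I + 1 := by
  rw [eps, eps, filter_insert, if_pos le_rfl,
    card_insert_of_notMem fun h => hi (mem_filter.mp h).1]

theorem orderEmbOfFin_comp_succAbove {d n : ℕ} {S T : Finset (Fin d)} (hS : S.card = n + 1)
    (hT : T.card = n) (k : Fin (n + 1)) (hST : S.erase (S.orderEmbOfFin hS k) = T) :
    S.orderEmbOfFin hS ∘ k.succAbove = T.orderEmbOfFin hT := by
  refine orderEmbOfFin_unique hT (fun x => ?_) ?_
  · rw [← hST, mem_erase]
    exact ⟨fun h => Fin.succAbove_ne k x ((S.orderEmbOfFin hS).injective h),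
      orderEmbOfFin_mem _ _ _⟩
  · exact (S.orderEmbOfFin hS).strictMono.comp (Fin.strictMono_succAbove k)

theorem sum_orderEmbOfFin {α M : Type*} [LinearOrder α] [AddCommMonoid M] (S : Finset α)
    {n : ℕ} (hS : S.card = n) (f : α → M) :
    ∑ j ∈ S, f j = ∑ k, f (S.orderEmbOfFin hS k) := by
  conv_lhs => rw [← map_orderEmbOfFin_univ S hS]
  rw [sum_map]
  rfl

theorem sum_eps_mul_plucker_erase {d n : ℕ} (B : Matrix (Fin d) (Fin n) ℂ) (w : Fin d → ℂ)
    {S : Finset (Fin d)} (hS : S.card = n + 1) :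
    ∑ j ∈ S, (-1) ^ eps j S * w j * plucker B (S.erase j)
      = -plucker (Matrix.of fun i => Fin.cons (w i) (B i)) S := by
  rw [plucker_eq_det _ hS, det_succ_column_zero, sum_orderEmbOfFin S hS, ← sum_neg_distrib]
  refine sum_congr rfl fun k _ => ?_
  have hT : (S.erase (S.orderEmbOfFin hS k)).card = n := by
    rw [card_erase_of_mem (orderEmbOfFin_mem _ _ _), hS, Nat.add_sub_cancel]
  simp only [eps_orderEmbOfFin, plucker_eq_det B hT,
    ← orderEmbOfFin_comp_succAbove hS hT k rfl, pow_succ]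
  simp [submatrix]

theorem sum_eps_mul_plucker_erase_eq_zero {d n : ℕ} (B : Matrix (Fin d) (Fin n) ℂ)
    {w : Fin d → ℂ} (hw : w ∈ Submodule.span ℂ (Set.range fun l i => B i l))
    {S : Finset (Fin d)} (hS : S.card = n + 1) :
    ∑ j ∈ S, (-1) ^ eps j S * w j * plucker B (S.erase j) = 0 := by
  obtain ⟨c, rfl⟩ := (mem_span_cols_iff_exists_mulVec B w).mp hw
  rw [sum_eps_mul_plucker_erase B _ hS, neg_eq_zero]
  refine plucker_eq_zero_of_mulVec_eq_zero (x := Fin.cons (-1) c)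
    (fun h => by simpa using congrFun h 0) (funext fun i => ?_) S
  simp [mulVec, dotProduct, Fin.sum_univ_succ]

noncomputable def minorWithRow {d m : ℕ} (B : Matrix (Fin d) (Fin (m + 1)) ℂ)
    {I : Finset (Fin d)} (hI : I.card = m) (i : Fin d) : ℂ :=
  (B.submatrix (Fin.cons i (I.orderEmbOfFin hI)) id).det

theorem minorWithRow_mem_span {d m : ℕ} (B : Matrix (Fin d) (Fin (m + 1)) ℂ)
    {I : Finset (Fin d)} (hI : I.card = m) :
    minorWithRow B hI ∈ Submodule.span ℂ (Set.range fun l i => B i l) := by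
  rw [mem_span_cols_iff_exists_mulVec]
  refine ⟨fun l => (-1) ^ (l : ℕ) * (B.submatrix (I.orderEmbOfFin hI) l.succAbove).det,
    funext fun i => ?_⟩
  rw [minorWithRow, det_succ_row_zero, mulVec, dotProduct]
  refine sum_congr rfl fun l _ => ?_
  simp only [submatrix, id_eq, of_apply, Fin.cons_zero, Fin.cons_succ]
  ring

theorem minorWithRow_of_mem {d m : ℕ} (B : Matrix (Fin d) (Fin (m + 1)) ℂ)
    {I : Finset (Fin d)} (hI : I.card = m) {i : Fin d} (hi : i ∈ I) :
    minorWithRow B hI i = 0 := by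
  obtain ⟨k, hk⟩ : i ∈ Set.range (I.orderEmbOfFin hI) := by rwa [range_orderEmbOfFin]
  refine det_zero_of_row_eq (Fin.succ_ne_zero k).symm (funext fun l => ?_)
  simp [hk]

theorem minorWithRow_of_notMem {d m : ℕ} (B : Matrix (Fin d) (Fin (m + 1)) ℂ)
    {I : Finset (Fin d)} (hI : I.card = m) {i : Fin d} (hi : i ∉ I) :
    minorWithRow B hI i = (-1) ^ eps i I * plucker B (insert i I) := by
  have hS : (insert i I).card = m + 1 := by rw [card_insert_of_notMem hi, hI]
  obtain ⟨k, hk⟩ : i ∈ Set.range ((insert i I).orderEmbOfFin hS) := by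
    rw [range_orderEmbOfFin]; exact mem_insert_self i I
  have hk_eps : eps i I = k := by
    have := eps_orderEmbOfFin hS k
    rw [hk, eps_insert_self hi] at this
    omega
  have hsucc := orderEmbOfFin_comp_succAbove hS hI k (by rw [hk, erase_insert hi])
  have hperm : B.submatrix ((insert i I).orderEmbOfFin hS) id
      = (B.submatrix (Fin.cons i (I.orderEmbOfFin hI)) id).submatrix k.cycleRange id := by
    ext x l
    rcases Fin.eq_self_or_eq_succAbove k x with rfl | ⟨y, rfl⟩
    · simp [hk]
    · simp [← hsucc]
  rw [plucker_eq_det B hS, hperm, det_permute, Fin.sign_cycleRange, minorWithRow, hk_eps]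
  push_cast
  rw [← mul_assoc, ← pow_add, Even.neg_one_pow ⟨k, rfl⟩, one_mul]

theorem qpr_eq_sum_mulVec {dp dq ep eq : ℕ} (A : Matrix (Fin dq) (Fin dp) ℂ)
    (Bp : Matrix (Fin dp) (Fin ep) ℂ) (Bq : Matrix (Fin dq) (Fin eq) ℂ)
    {I : Finset (Fin dp)} (J : Finset (Fin dq)) {v : Fin dp → ℂ} (hv_mem : ∀ i ∈ I, v i = 0)
    (hv_notMem : ∀ i ∉ I, v i = (-1) ^ eps i I * plucker Bp (insert i I)) :
    qpr A Bp Bq I J = ∑ j ∈ J, (-1) ^ eps j J * (A *ᵥ v) j * plucker Bq (J.erase j) := by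
  have hAv (j) :
      ∑ i ∈ Iᶜ, A j i * ((-1) ^ eps i I * plucker Bp (insert i I)) = (A *ᵥ v) j := by
    rw [mulVec, dotProduct, ← sum_compl_add_sum I, sum_eq_zero (s := I), add_zero]
    · exact sum_congr rfl fun i hi => by rw [hv_notMem i (mem_compl.mp hi)]
    · exact fun i hi => by rw [hv_mem i hi, mul_zero]
  simp only [qpr, ← hAv, sum_comm (s := Iᶜ), mul_sum, sum_mul]
  refine sum_congr rfl fun j _ => sum_congr rfl fun i _ => ?_
  ring

theorem stmt1 {dp dq ep eq : ℕ}
    (Np : Submodule ℂ (Fin dp → ℂ)) (Nq : Submodule ℂ (Fin dq → ℂ))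
    (Bp : Matrix (Fin dp) (Fin ep) ℂ) (Bq : Matrix (Fin dq) (Fin eq) ℂ)
    (hBp : IsColBasis Bp Np) (hBq : IsColBasis Bq Nq)
    (A : Matrix (Fin dq) (Fin dp) ℂ)
    (hA : ∀ x ∈ Np, A.mulVec x ∈ Nq)
    (I : Finset (Fin dp)) (hI : I.card + 1 = ep)
    (J : Finset (Fin dq)) (hJ : J.card = eq + 1) :
    qpr A Bp Bq I J = 0 := by
  subst hI
  have hv : minorWithRow Bp (rfl : I.card = I.card) ∈ Np :=
    hBp.2 ▸ minorWithRow_mem_span Bp rfl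
  rw [qpr_eq_sum_mulVec A Bp Bq J (fun _ => minorWithRow_of_mem Bp rfl)
    (fun _ => minorWithRow_of_notMem Bp rfl)]
  exact sum_eps_mul_plucker_erase_eq_zero Bq (hBq.2 ▸ hA _ hv) hJ
end

section
/- Let $(\Delta_1,\Delta_2,\Delta_3) \in \mathbb{C}^3$ and $(\Delta_{456},\Delta_{457},\Delta_{467},\Delta_{567}) \in \mathbb{C}^4$ satisfy $\Delta_3\Delta_{456} = \Delta_1\Delta_{567}$, $\Delta_3\Delta_{457} = \Delta_2\Delta_{567}$, $\Delta_3\Delta_{467} = \Delta_1\Delta_{456}$, and $\Delta_1\Delta_{567} - \Delta_1\Delta_{467} + \Delta_2\Delta_{457} = 0$. If $\Delta_3 \ne 0$ and $\Delta_{567} \ne 0$, then $\Delta_2^2\Delta_3 - \Delta_1^3 + \Delta_1\Delta_3^2 = 0$. -/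
/-- Substituting the first three relations into `Δ3 ^ 2` times the fourth turns it into
`Δ567` times the cubic. -/
theorem mul_cubic_eq_zero_of_quiver_pluecker {R : Type*} [CommRing R]
    {Δ1 Δ2 Δ3 Δ456 Δ457 Δ467 Δ567 : R}
    (h1 : Δ3 * Δ456 = Δ1 * Δ567) (h2 : Δ3 * Δ457 = Δ2 * Δ567)
    (h3 : Δ3 * Δ467 = Δ1 * Δ456)
    (h4 : Δ1 * Δ567 - Δ1 * Δ467 + Δ2 * Δ457 = 0) :
    Δ567 * (Δ2 ^ 2 * Δ3 - Δ1 ^ 3 + Δ1 * Δ3 ^ 2) = 0 := by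
  linear_combination Δ3 ^ 2 * h4 + Δ1 * Δ3 * h3 - Δ2 * Δ3 * h2 + Δ1 ^ 2 * h1

theorem stmt12_general (Δ1 Δ2 Δ3 Δ456 Δ457 Δ467 Δ567 : ℂ)
    (h1 : Δ3 * Δ456 = Δ1 * Δ567) (h2 : Δ3 * Δ457 = Δ2 * Δ567)
    (h3 : Δ3 * Δ467 = Δ1 * Δ456)
    (h4 : Δ1 * Δ567 - Δ1 * Δ467 + Δ2 * Δ457 = 0)
    (h567ne : Δ567 ≠ 0) :
    Δ2 ^ 2 * Δ3 - Δ1 ^ 3 + Δ1 * Δ3 ^ 2 = 0 :=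
  (mul_eq_zero.mp (mul_cubic_eq_zero_of_quiver_pluecker h1 h2 h3 h4)).resolve_left h567ne

theorem stmt12 (Δ1 Δ2 Δ3 Δ456 Δ457 Δ467 Δ567 : ℂ)
    (h1 : Δ3 * Δ456 = Δ1 * Δ567) (h2 : Δ3 * Δ457 = Δ2 * Δ567)
    (h3 : Δ3 * Δ467 = Δ1 * Δ456)
    (h4 : Δ1 * Δ567 - Δ1 * Δ467 + Δ2 * Δ457 = 0)
    (h3ne : Δ3 ≠ 0) (h567ne : Δ567 ≠ 0) :
    Δ2 ^ 2 * Δ3 - Δ1 ^ 3 + Δ1 * Δ3 ^ 2 = 0 :=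
  stmt12_general Δ1 Δ2 Δ3 Δ456 Δ457 Δ467 Δ567 h1 h2 h3 h4 h567ne
end
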